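/- For 0 < α < 1, the ψ_α-Orlicz norm is a quasi-norm: if X and Y are real random variables with finite ψ_α-Orlicz norms, then ‖X + Y‖_{ψ_α} ≤ 2^{1/α} (‖X‖_{ψ_α} + ‖Y‖_{ψ_α}). -/

import Mathlib

open MeasureTheory Real


lemma psi_pointwise_key (α : ℝ) (hα0 : 0 < α) (s x y ε δ : ℝ)
    (hε : 0 < ε) (hδ : 0 < δ) (hs : |s| ≤ |x| + |y|) :
    Real.exp ((|s| / ((2 : ℝ) ^ (1 / α) * (ε + δ))) ^ α) - 1 ≤
      2⁻¹ * (Real.exp ((|x| / ε) ^ α) - 1) + 2⁻¹ * (Real.exp ((|y| / δ) ^ α) - 1) := by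
  have h2 : (0 : ℝ) < (2 : ℝ) ^ (1 / α) := Real.rpow_pos_of_pos two_pos _
  set u : ℝ := (|x| / ε) ^ α with hu
  set v : ℝ := (|y| / δ) ^ α with hv
  have hxε : (0:ℝ) ≤ |x| / ε := div_nonneg (abs_nonneg _) hε.le
  have hyδ : (0:ℝ) ≤ |y| / δ := div_nonneg (abs_nonneg _) hδ.le
  have hm : |s| / (ε + δ) ≤ max (|x| / ε) (|y| / δ) := by
    rw [div_le_iff₀ (by linarith)]
    have h1 : |x| ≤ max (|x| / ε) (|y| / δ) * ε := by
      have := le_max_left (|x| / ε) (|y| / δ)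
      calc |x| = |x| / ε * ε := by field_simp
        _ ≤ max (|x| / ε) (|y| / δ) * ε := by nlinarith
    have h2' : |y| ≤ max (|x| / ε) (|y| / δ) * δ := by
      have := le_max_right (|x| / ε) (|y| / δ)
      calc |y| = |y| / δ * δ := by field_simp
        _ ≤ max (|x| / ε) (|y| / δ) * δ := by nlinarith
    calc |s| ≤ |x| + |y| := hs
      _ ≤ max (|x| / ε) (|y| / δ) * ε + max (|x| / ε) (|y| / δ) * δ := by linarith
      _ = max (|x| / ε) (|y| / δ) * (ε + δ) := by ring
  have hkey : (|s| / ((2 : ℝ) ^ (1 / α) * (ε + δ))) ^ α ≤ (u + v) / 2 := by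
    have hdiv : |s| / ((2 : ℝ) ^ (1 / α) * (ε + δ)) =
        (|s| / (ε + δ)) / (2 : ℝ) ^ (1 / α) := by
      rw [div_div, mul_comm]
    rw [hdiv]
    have hmono : ((|s| / (ε + δ)) / (2 : ℝ) ^ (1 / α)) ^ α ≤
        ((max (|x| / ε) (|y| / δ)) / (2 : ℝ) ^ (1 / α)) ^ α := by
      apply Real.rpow_le_rpow (by positivity) (by gcongr) hα0.le
    refine hmono.trans ?_
    rw [Real.div_rpow (le_trans hxε (le_max_left _ _)) h2.le]
    have h2α : ((2:ℝ) ^ (1/α)) ^ α = 2 := by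
      rw [← Real.rpow_mul (by norm_num), one_div_mul_cancel hα0.ne', Real.rpow_one]
    rw [h2α]
    have hmax : (max (|x| / ε) (|y| / δ)) ^ α ≤ u + v := by
      have hu0 : 0 ≤ u := Real.rpow_nonneg hxε _
      have hv0 : 0 ≤ v := Real.rpow_nonneg hyδ _
      rcases max_cases (|x| / ε) (|y| / δ) with ⟨h, _⟩ | ⟨h, _⟩ <;> rw [h] <;> linarith
    linarith
  -- exp monotone then AM-GM
  have hexp : Real.exp ((|s| / ((2 : ℝ) ^ (1 / α) * (ε + δ))) ^ α) ≤
      Real.exp ((u + v) / 2) := Real.exp_le_exp.mpr hkey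
  have hamgm : Real.exp ((u + v) / 2) ≤ (Real.exp u + Real.exp v) / 2 := by
    have h1 : Real.exp ((u+v)/2) = Real.exp (u/2) * Real.exp (v/2) := by
      rw [← Real.exp_add]; ring_nf
    have h2' : Real.exp u = Real.exp (u/2) * Real.exp (u/2) := by
      rw [← Real.exp_add]; ring_nf
    have h3 : Real.exp v = Real.exp (v/2) * Real.exp (v/2) := by
      rw [← Real.exp_add]; ring_nf
    nlinarith [sq_nonneg (Real.exp (u/2) - Real.exp (v/2))]
  linarith

lemma psi_mem_key {Ω : Type*} [MeasurableSpace Ω] (μ : Measure Ω) [IsProbabilityMeasure μ]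
    (α : ℝ) (hα0 : 0 < α) (X Y : Ω → ℝ) (hX : Measurable X) (hY : Measurable Y) {ε δ : ℝ}
    (hε : ε ∈ {ε : ℝ | 0 < ε ∧
      ∫⁻ ω, ENNReal.ofReal (Real.exp ((|X ω| / ε) ^ α) - 1) ∂μ ≤ 1})
    (hδ : δ ∈ {ε : ℝ | 0 < ε ∧
      ∫⁻ ω, ENNReal.ofReal (Real.exp ((|Y ω| / ε) ^ α) - 1) ∂μ ≤ 1}) :
    (2 : ℝ) ^ (1 / α) * (ε + δ) ∈ {c : ℝ | 0 < c ∧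
      ∫⁻ ω, ENNReal.ofReal (Real.exp ((|(X + Y) ω| / c) ^ α) - 1) ∂μ ≤ 1} := by
  obtain ⟨hε0, hεI⟩ := hε
  obtain ⟨hδ0, hδI⟩ := hδ
  have h2 : (0 : ℝ) < (2 : ℝ) ^ (1 / α) := Real.rpow_pos_of_pos two_pos _
  refine ⟨by positivity, ?_⟩
  have hpt : ∀ ω, ENNReal.ofReal (Real.exp ((|(X + Y) ω| / ((2 : ℝ) ^ (1 / α) * (ε + δ))) ^ α) - 1)
      ≤ 2⁻¹ * ENNReal.ofReal (Real.exp ((|X ω| / ε) ^ α) - 1)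
        + 2⁻¹ * ENNReal.ofReal (Real.exp ((|Y ω| / δ) ^ α) - 1) := by
    intro ω
    have key := psi_pointwise_key α hα0 ((X + Y) ω) (X ω) (Y ω) ε δ hε0 hδ0
      (by simpa using abs_add_le (X ω) (Y ω))
    calc ENNReal.ofReal (Real.exp ((|(X + Y) ω| / ((2 : ℝ) ^ (1 / α) * (ε + δ))) ^ α) - 1)
        ≤ ENNReal.ofReal (2⁻¹ * (Real.exp ((|X ω| / ε) ^ α) - 1)
            + 2⁻¹ * (Real.exp ((|Y ω| / δ) ^ α) - 1)) := ENNReal.ofReal_le_ofReal key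
      _ ≤ ENNReal.ofReal (2⁻¹ * (Real.exp ((|X ω| / ε) ^ α) - 1))
            + ENNReal.ofReal (2⁻¹ * (Real.exp ((|Y ω| / δ) ^ α) - 1)) := ENNReal.ofReal_add_le
      _ = 2⁻¹ * ENNReal.ofReal (Real.exp ((|X ω| / ε) ^ α) - 1)
            + 2⁻¹ * ENNReal.ofReal (Real.exp ((|Y ω| / δ) ^ α) - 1) := by
          rw [ENNReal.ofReal_mul (by norm_num), ENNReal.ofReal_mul (by norm_num)]
          have h12 : ENNReal.ofReal 2⁻¹ = 2⁻¹ := by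
            rw [ENNReal.ofReal_inv_of_pos two_pos, ENNReal.ofReal_ofNat]
          rw [h12]
  calc ∫⁻ ω, ENNReal.ofReal (Real.exp ((|(X + Y) ω| / ((2 : ℝ) ^ (1 / α) * (ε + δ))) ^ α) - 1) ∂μ
      ≤ ∫⁻ ω, (2⁻¹ * ENNReal.ofReal (Real.exp ((|X ω| / ε) ^ α) - 1)
          + 2⁻¹ * ENNReal.ofReal (Real.exp ((|Y ω| / δ) ^ α) - 1)) ∂μ := lintegral_mono hpt
    _ ≤ (∫⁻ ω, 2⁻¹ * ENNReal.ofReal (Real.exp ((|X ω| / ε) ^ α) - 1) ∂μ)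
          + ∫⁻ ω, 2⁻¹ * ENNReal.ofReal (Real.exp ((|Y ω| / δ) ^ α) - 1) ∂μ :=
        le_of_eq (lintegral_add_left (by fun_prop) _)
    _ = 2⁻¹ * (∫⁻ ω, ENNReal.ofReal (Real.exp ((|X ω| / ε) ^ α) - 1) ∂μ)
          + 2⁻¹ * ∫⁻ ω, ENNReal.ofReal (Real.exp ((|Y ω| / δ) ^ α) - 1) ∂μ := by
        rw [lintegral_const_mul' _ _ (by norm_num), lintegral_const_mul' _ _ (by norm_num)]
    _ ≤ 2⁻¹ * 1 + 2⁻¹ * 1 := by gcongr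
    _ = 1 := by
        simp only [mul_one]
        exact ENNReal.inv_two_add_inv_two


/-- The ψ_α-Orlicz norm of a real random variable:
`‖X‖_{ψ_α} = inf {ε > 0 : E[exp((|X|/ε)^α) − 1] ≤ 1}`. -/
noncomputable def psiOrliczNorm {Ω : Type*} [MeasurableSpace Ω] (μ : Measure Ω)
    (α : ℝ) (X : Ω → ℝ) : ℝ :=
  sInf {ε : ℝ | 0 < ε ∧
    ∫⁻ ω, ENNReal.ofReal (Real.exp ((|X ω| / ε) ^ α) - 1) ∂μ ≤ 1}

/-- For `0 < α < 1`, the ψ_α-Orlicz norm is a quasi-norm. -/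
theorem psiOrliczNorm_quasi_triangle
    {Ω : Type*} [MeasurableSpace Ω] (μ : Measure Ω) [IsProbabilityMeasure μ]
    (α : ℝ) (hα0 : 0 < α) (hα1 : α < 1) (X Y : Ω → ℝ) (hX : Measurable X) (hY : Measurable Y)
    (hXfin : {ε : ℝ | 0 < ε ∧
      ∫⁻ ω, ENNReal.ofReal (Real.exp ((|X ω| / ε) ^ α) - 1) ∂μ ≤ 1}.Nonempty)
    (hYfin : {ε : ℝ | 0 < ε ∧
      ∫⁻ ω, ENNReal.ofReal (Real.exp ((|Y ω| / ε) ^ α) - 1) ∂μ ≤ 1}.Nonempty) :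
    psiOrliczNorm μ α (X + Y) ≤ (2 : ℝ) ^ (1 / α) * (psiOrliczNorm μ α X + psiOrliczNorm μ α Y) := by
  have h2 : (0 : ℝ) < (2 : ℝ) ^ (1 / α) := Real.rpow_pos_of_pos two_pos _
  have hbdd : BddBelow {c : ℝ | 0 < c ∧
      ∫⁻ ω, ENNReal.ofReal (Real.exp ((|(X + Y) ω| / c) ^ α) - 1) ∂μ ≤ 1} :=
    ⟨0, fun x hx => hx.1.le⟩
  refine le_of_forall_pos_le_add fun η hη => ?_
  set η' : ℝ := η / (2 * (2 : ℝ) ^ (1 / α)) with hη'def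
  have hη'pos : 0 < η' := by positivity
  obtain ⟨ε, hεmem, hεlt⟩ := Real.lt_sInf_add_pos hXfin hη'pos
  obtain ⟨δ, hδmem, hδlt⟩ := Real.lt_sInf_add_pos hYfin hη'pos
  have hmem := psi_mem_key μ α hα0 X Y hX hY hεmem hδmem
  have h1 : psiOrliczNorm μ α (X + Y) ≤ (2 : ℝ) ^ (1 / α) * (ε + δ) := csInf_le hbdd hmem
  have haX : ε < psiOrliczNorm μ α X + η' := hεlt
  have haY : δ < psiOrliczNorm μ α Y + η' := hδlt
  have hsum : ε + δ < psiOrliczNorm μ α X + psiOrliczNorm μ α Y + 2 * η' := by linarith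
  have hmul := mul_lt_mul_of_pos_left hsum h2
  have hηeq : (2 : ℝ) ^ (1 / α) * (2 * η') = η := by
    rw [hη'def]; field_simp
  nlinarith [hmul, h1]
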